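/- arXiv:2503.14132 — 3 statements merged into one kernel-verified Lean document; each statement's English description precedes it below -/
import Mathlib

section
/- Chain rule for squared functions: let f, g be locally Lipschitz on a metric space X with g ≥ 0. Then D⁺f(∇g²)(x) = 2 g(x) · D⁺f(∇g)(x) for every x ∈ X, where g² denotes the pointwise square of g and D⁺f(∇h)(x) := inf_{ε>0} (lip(h+εf)²(x) − lip(h)²(x))/(2ε). -/
/-!
Near `x` one has `g y ^ 2 = 2 * g x * g y - g x ^ 2 + (g y - g x) ^ 2`, and since `g` is locally
Lipschitz the last term is `O(dist x y ^ 2)`. A perturbation that is `o(dist x y)` does not change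
the slope, so `lip(g² + εf)(x) = lip(2 g(x) g + εf)(x)` for every `ε`, and therefore
`D⁺f(∇g²)(x) = D⁺f(∇(c g))(x)` with `c = 2 g(x) ≥ 0`. For `c > 0`, positive homogeneity of the
slope turns the quotient at `ε` for `c g` into `c` times the quotient at `ε / c` for `g`; for `c = 0`
the quotients are `ε lip(f)(x)² / 2`, whose infimum over `ε > 0` is `0`.
-/

open Filter Metric MeasureTheory Topology

variable {X : Type*} [MetricSpace X]

open Classical in
noncomputable def lipSlope (f : X → ℝ) (x : X) : ℝ :=
  if (𝓝[≠] x) = ⊥ then 0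
  else Filter.limsup (fun y => |f x - f y| / dist x y) (𝓝[≠] x)

noncomputable def Dplus (f g : X → ℝ) (x : X) : ℝ :=
  sInf ((fun ε : ℝ =>
    ((lipSlope (fun y => g y + ε * f y) x) ^ 2 - (lipSlope g x) ^ 2) / (2 * ε)) '' Set.Ioi 0)

noncomputable def Dminus (f g : X → ℝ) (x : X) : ℝ :=
  sSup ((fun ε : ℝ =>
    ((lipSlope (fun y => g y + ε * f y) x) ^ 2 - (lipSlope g x) ^ 2) / (2 * ε)) '' Set.Iio 0)

theorem limsup_eq_of_tendsto_sub {α : Type*} {l : Filter α} [l.NeBot] {F G : α → ℝ}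
    (hG : IsBoundedUnder (· ≤ ·) l G) (hG' : IsBoundedUnder (· ≥ ·) l G)
    (h : Tendsto (F - G) l (𝓝 0)) :
    limsup F l = limsup G l := by
  have hF : G + (F - G) = F := add_sub_cancel G F
  apply le_antisymm
  · calc limsup F l = limsup (G + (F - G)) l := by rw [hF]
      _ ≤ limsup G l + limsup (F - G) l :=
        limsup_add_le hG' hG h.isBoundedUnder_ge.isCoboundedUnder_le h.isBoundedUnder_le
      _ = limsup G l := by rw [h.limsup_eq, add_zero]
  · calc limsup G l = limsup G l + liminf (F - G) l := by rw [h.liminf_eq, add_zero]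
      _ ≤ limsup (G + (F - G)) l :=
        le_limsup_add hG hG'.isCoboundedUnder_le h.isBoundedUnder_le h.isBoundedUnder_ge
      _ = limsup F l := by rw [hF]

theorem LocallyLipschitz.const_mul {α : Type*} [PseudoEMetricSpace α] {f : α → ℝ}
    (hf : LocallyLipschitz f) (c : ℝ) : LocallyLipschitz fun y => c * f y :=
  (lipschitzWith_smul c).locallyLipschitz.comp hf

section lipSlope

variable {g h u v : X → ℝ} {x : X}

theorem lipSlope_of_nhdsNE_eq_bot (hx : 𝓝[≠] x = ⊥) : lipSlope h x = 0 :=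
  if_pos hx

theorem lipSlope_eq_limsup [hx : (𝓝[≠] x).NeBot] :
    lipSlope h x = limsup (fun y => |h x - h y| / dist x y) (𝓝[≠] x) :=
  if_neg hx.ne

theorem LocallyLipschitz.isBoundedUnder_slope (hh : LocallyLipschitz h) (x : X) :
    IsBoundedUnder (· ≤ ·) (𝓝[≠] x) fun y => |h x - h y| / dist x y := by
  obtain ⟨K, t, ht, hK⟩ := hh x
  refine isBoundedUnder_of_eventually_le (a := K) ?_
  filter_upwards [mem_nhdsWithin_of_mem_nhds ht] with y hy
  refine div_le_of_le_mul₀ dist_nonneg K.coe_nonneg ?_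
  simpa [Real.dist_eq] using hK.dist_le_mul x (mem_of_mem_nhds ht) y hy

theorem lipSlope_const (c : ℝ) (x : X) : lipSlope (fun _ => c) x = 0 := by
  rcases (𝓝[≠] x).eq_or_neBot with hx | hx
  · exact lipSlope_of_nhdsNE_eq_bot hx
  · simp [lipSlope_eq_limsup]

theorem lipSlope_const_mul {c : ℝ} (hc : 0 ≤ c)
    (hh : IsBoundedUnder (· ≤ ·) (𝓝[≠] x) fun y => |h x - h y| / dist x y) :
    lipSlope (fun y => c * h y) x = c * lipSlope h x := by
  rcases (𝓝[≠] x).eq_or_neBot with hx | hx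
  · simp [lipSlope_of_nhdsNE_eq_bot hx]
  rw [lipSlope_eq_limsup, lipSlope_eq_limsup]
  have hquot : (fun y => |c * h x - c * h y| / dist x y)
      = (c * ·) ∘ fun y => |h x - h y| / dist x y := by
    funext y
    rw [Function.comp_apply, ← mul_sub, abs_mul, abs_of_nonneg hc, mul_div_assoc]
  rw [hquot, ← Monotone.map_limsup_of_continuousAt (monotone_mul_left_of_nonneg hc) _
    (continuous_const_mul c).continuousAt hh
    (isCoboundedUnder_le_of_le _ (x := 0) fun y => by positivity)]

theorem lipSlope_eq_of_tendsto
    (hv : IsBoundedUnder (· ≤ ·) (𝓝[≠] x) fun y => |v x - v y| / dist x y)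
    (huv : Tendsto (fun y => |(u x - u y) - (v x - v y)| / dist x y) (𝓝[≠] x) (𝓝 0)) :
    lipSlope u x = lipSlope v x := by
  rcases (𝓝[≠] x).eq_or_neBot with hx | hx
  · simp only [lipSlope_of_nhdsNE_eq_bot hx]
  rw [lipSlope_eq_limsup, lipSlope_eq_limsup]
  refine limsup_eq_of_tendsto_sub hv (isBoundedUnder_of ⟨0, fun y => by positivity⟩)
    (squeeze_zero_norm (fun y => ?_) huv)
  rw [Pi.sub_apply, Real.norm_eq_abs, div_sub_div_same, abs_div, abs_of_nonneg dist_nonneg]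
  exact div_le_div_of_nonneg_right (abs_abs_sub_abs_le_abs_sub _ _) dist_nonneg

theorem LocallyLipschitz.tendsto_sq_sub_div_dist (hg : LocallyLipschitz g) (x : X) :
    Tendsto (fun y => (g x - g y) ^ 2 / dist x y) (𝓝[≠] x) (𝓝 0) := by
  have hcont : Tendsto (fun y => |g x - g y|) (𝓝[≠] x) (𝓝 0) := by
    simpa using (((hg.continuous.tendsto x).const_sub (g x)).abs).mono_left nhdsWithin_le_nhds
  refine (hcont.zero_mul_isBoundedUnder_le (g := fun y => |g x - g y| / dist x y) ?_).congr
    fun y => ?_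
  · simpa [Function.comp_def, abs_div] using hg.isBoundedUnder_slope x
  · rw [← mul_div_assoc, ← sq, sq_abs]

theorem lipSlope_sq_add (hg : LocallyLipschitz g) (hh : LocallyLipschitz h) (x : X) :
    lipSlope (fun y => g y ^ 2 + h y) x = lipSlope (fun y => 2 * g x * g y + h y) x := by
  refine lipSlope_eq_of_tendsto (((hg.const_mul (2 * g x)).add hh).isBoundedUnder_slope x)
    ((hg.tendsto_sq_sub_div_dist x).congr fun y => ?_)
  rw [show g x ^ 2 + h x - (g y ^ 2 + h y) - (2 * g x * g x + h x - (2 * g x * g y + h y))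
    = -(g x - g y) ^ 2 by ring, abs_neg, abs_sq]

end lipSlope

section Dplus

open scoped Pointwise

variable {f g u v : X → ℝ} {x : X}

noncomputable def dplusQuot (f g : X → ℝ) (x : X) (ε : ℝ) : ℝ :=
  (lipSlope (fun y => g y + ε * f y) x ^ 2 - lipSlope g x ^ 2) / (2 * ε)

theorem Dplus_eq_sInf_dplusQuot : Dplus f g x = sInf (dplusQuot f g x '' Set.Ioi 0) := rfl

theorem Dplus_congr
    (h : ∀ ε, lipSlope (fun y => u y + ε * f y) x = lipSlope (fun y => v y + ε * f y) x) :
    Dplus f u x = Dplus f v x := by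
  have h0 : lipSlope u x = lipSlope v x := by simpa using h 0
  simp only [Dplus, h, h0]

theorem dplusQuot_zero (hf : LocallyLipschitz f) {ε : ℝ} (hε : 0 < ε) :
    dplusQuot f (fun _ => 0) x ε = (lipSlope f x ^ 2 / 2) • ε := by
  simp only [dplusQuot, zero_add]
  rw [lipSlope_const, lipSlope_const_mul hε.le (hf.isBoundedUnder_slope x), smul_eq_mul]
  field_simp
  ring

theorem Dplus_zero (hf : LocallyLipschitz f) (x : X) : Dplus f (fun _ => 0) x = 0 := by
  have hquot : Set.EqOn (dplusQuot f (fun _ => 0) x) (fun ε => (lipSlope f x ^ 2 / 2) • ε)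
      (Set.Ioi 0) := fun _ hε => dplusQuot_zero hf hε
  rw [Dplus_eq_sInf_dplusQuot, hquot.image_eq, Set.image_smul,
    Real.sInf_smul_of_nonneg (by positivity), csInf_Ioi, smul_zero]

theorem dplusQuot_const_mul (hf : LocallyLipschitz f) (hg : LocallyLipschitz g) {c : ℝ}
    (hc : 0 < c) (ε : ℝ) :
    dplusQuot f (fun y => c * g y) x ε = c • dplusQuot f g x (c⁻¹ * ε) := by
  have hslope : lipSlope (fun y => c * g y + ε * f y) x
      = c * lipSlope (fun y => g y + c⁻¹ * ε * f y) x := by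
    have hfun : (fun y => c * g y + ε * f y) = fun y => c * (g y + c⁻¹ * ε * f y) := by
      funext y
      field_simp
    rw [hfun]
    exact lipSlope_const_mul hc.le ((hg.add (hf.const_mul (c⁻¹ * ε))).isBoundedUnder_slope x)
  rw [dplusQuot, dplusQuot, hslope, lipSlope_const_mul hc.le (hg.isBoundedUnder_slope x),
    smul_eq_mul]
  field_simp

theorem Dplus_const_mul (hf : LocallyLipschitz f) (hg : LocallyLipschitz g) {c : ℝ} (hc : 0 ≤ c)
    (x : X) : Dplus f (fun y => c * g y) x = c * Dplus f g x := by
  rcases hc.eq_or_lt with rfl | hc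
  · simpa only [zero_mul] using Dplus_zero hf x
  have himage : (fun ε => c • dplusQuot f g x (c⁻¹ * ε)) '' Set.Ioi 0
      = c • (dplusQuot f g x '' Set.Ioi 0) := by
    conv_rhs => rw [← Set.image_const_mul_Ioi_zero (inv_pos.2 hc)]
    rw [← Set.image_smul, Set.image_image, Set.image_image]
  have hquot : Set.EqOn (dplusQuot f (fun y => c * g y) x)
      (fun ε => c • dplusQuot f g x (c⁻¹ * ε)) (Set.Ioi 0) :=
    fun ε _ => dplusQuot_const_mul hf hg hc ε
  rw [Dplus_eq_sInf_dplusQuot, Dplus_eq_sInf_dplusQuot, hquot.image_eq, himage,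
    Real.sInf_smul_of_nonneg hc.le, smul_eq_mul]

end Dplus

theorem Dplus_chain_sq (f g : X → ℝ)
    (hf : LocallyLipschitz f) (hg : LocallyLipschitz g) (hg0 : ∀ y, 0 ≤ g y) :
    ∀ x : X, Dplus f (fun y => (g y) ^ 2) x = 2 * g x * Dplus f g x := by
  intro x
  rw [Dplus_congr fun ε => lipSlope_sq_add hg (hf.const_mul ε) x,
    Dplus_const_mul hf hg (mul_nonneg zero_le_two (hg0 x)) x]
end

section
/- Let r_i := 2^{-i-2} for i ≥ 1 and let (x_i) be points of the flat 2-torus T = ℝ²/ℤ² (with geodesic distance d) such that for each k ≥ 2, x_k maximises the distance to ⋃_{i=1}^{k-1} B(x_i, r_i). Then for every k ≥ 2, dist(x_k, ⋃_{i=1}^{k-1} B(x_i,r_i)) ≥ 2 r_k. Key step: the intervals [d(x₁,x_i) − r_i, d(x₁,x_i) + r_i] for i = 1,…,k−1 cover total length at most Σ_{i=1}^{k-1} 2^{-i-1} < 1/2 of [0,1], hence the complement in [0,1] contains an interval of length at least 1/(2k) ≥ 2^{-k} = 4r_k, and there exists a point y ∈ T with d(x₁,y) equal to the midpoint of that interval,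 satisfying dist(y, ⋃_{i=1}^{k-1} B(x_i,r_i)) ≥ 2r_k. -/
open Real MeasureTheory

/-- The flat 2-torus `ℝ²/ℤ²`. -/
abbrev Torus := AddCircle (1 : ℝ) × AddCircle (1 : ℝ)

/-- The geodesic (flat Euclidean) distance on the torus. -/
noncomputable def torusDist (p q : Torus) : ℝ :=
  Real.sqrt (dist p.1 q.1 ^ 2 + dist p.2 q.2 ^ 2)

/-- Distance from a point to a set with respect to the geodesic torus distance. -/
noncomputable def torusSetDist (y : Torus) (A : Set Torus) : ℝ :=
  sInf (torusDist y '' A)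

/-- Open ball in the torus for the geodesic distance. -/
def torusBall (z : Torus) (ρ : ℝ) : Set Torus := {w : Torus | torusDist z w < ρ}

/-!
Instead of the distance to `x₁` we use the projection to the first circle factor, which is
also 1-Lipschitz onto a circle of length 1. The closed `(rᵢ + 2 r_k)`-neighbourhoods of the
projected centres `xᵢ.1`, `i < k`, have total length `∑ (2 rᵢ + 4 r_k) < 1`, so some `c` on the
circle avoids all of them. Then `y = (c, 0)` is at distance at least `2 r_k` from every ball
`B(xᵢ, rᵢ)`, and the maximality of `x_k` passes this bound on to `x_k`.
-/

theorem AddCircle.exists_forall_lt_dist {T : ℝ} [Fact (0 < T)] {ι : Type*} (s : Finset ι)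
    (z : ι → AddCircle T) (ρ : ι → ℝ) (hρ : ∀ i ∈ s, 0 ≤ ρ i) (hsum : ∑ i ∈ s, 2 * ρ i < T) :
    ∃ c : AddCircle T, ∀ i ∈ s, ρ i < dist c (z i) := by
  have hvol : volume (⋃ i ∈ s, Metric.closedBall (z i) (ρ i))
      < volume (Set.univ : Set (AddCircle T)) := by
    rw [AddCircle.measure_univ]
    calc volume (⋃ i ∈ s, Metric.closedBall (z i) (ρ i))
        ≤ ∑ i ∈ s, volume (Metric.closedBall (z i) (ρ i)) := measure_biUnion_finset_le _ _
      _ ≤ ∑ i ∈ s, ENNReal.ofReal (2 * ρ i) := by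
          gcongr with i
          rw [AddCircle.volume_closedBall]
          exact ENNReal.ofReal_le_ofReal (min_le_right _ _)
      _ = ENNReal.ofReal (∑ i ∈ s, 2 * ρ i) :=
          (ENNReal.ofReal_sum_of_nonneg fun i hi => by linarith [hρ i hi]).symm
      _ < ENNReal.ofReal T := (ENNReal.ofReal_lt_ofReal_iff Fact.out).mpr hsum
  obtain ⟨c, hc⟩ := (Set.ne_univ_iff_exists_notMem _).mp fun h => hvol.ne (congrArg volume h)
  refine ⟨c, fun i hi => lt_of_not_ge fun hle => hc ?_⟩
  exact Set.mem_biUnion hi (Metric.mem_closedBall.mpr hle)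

theorem dist_fst_le_torusDist (p q : Torus) : dist p.1 q.1 ≤ torusDist p q :=
  Real.le_sqrt_of_sq_le (le_add_of_nonneg_right (sq_nonneg _))

theorem le_torusDist_of_mem_torusBall {z a : Torus} {ρ δ : ℝ} {c : AddCircle (1 : ℝ)}
    (w : AddCircle (1 : ℝ)) (ha : a ∈ torusBall z ρ) (hc : ρ + δ < dist c z.1) :
    δ ≤ torusDist (c, w) a := by
  have hza : dist z.1 a.1 < ρ := (dist_fst_le_torusDist z a).trans_lt ha
  have hca : dist c a.1 ≤ torusDist (c, w) a := dist_fst_le_torusDist (c, w) a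
  linarith [dist_triangle_right c z.1 a.1]

theorem le_torusSetDist {y : Torus} {A : Set Torus} {δ : ℝ} (hA : A.Nonempty)
    (h : ∀ a ∈ A, δ ≤ torusDist y a) : δ ≤ torusSetDist y A :=
  le_csInf (hA.image _) (by rintro _ ⟨a, ha, rfl⟩; exact h a ha)

theorem sum_Icc_inv_two_pow_succ (n : ℕ) :
    ∑ i ∈ Finset.Icc 1 n, (2⁻¹ : ℝ) ^ (i + 1) = 2⁻¹ - 2⁻¹ ^ (n + 1) := by
  induction n with
  | zero => simp
  | succ n ih =>
    rw [Finset.sum_Icc_succ_top (Nat.le_add_left 1 n), ih]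
    ring

theorem sum_Icc_two_mul_radius_lt_one (n : ℕ) :
    ∑ i ∈ Finset.Icc 1 n, 2 * ((2⁻¹ : ℝ) ^ (i + 2) + 2 * 2⁻¹ ^ (n + 3)) < 1 := by
  have hn : (n : ℝ) < 2 ^ n := by exact_mod_cast Nat.lt_two_pow_self
  have hsplit : ∑ i ∈ Finset.Icc 1 n, 2 * ((2⁻¹ : ℝ) ^ (i + 2) + 2 * 2⁻¹ ^ (n + 3))
      = ∑ i ∈ Finset.Icc 1 n, (2⁻¹ : ℝ) ^ (i + 1) + n * 2⁻¹ ^ (n + 1) := by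
    simp only [mul_add, Finset.sum_add_distrib, Finset.sum_const, Nat.card_Icc, nsmul_eq_mul]
    congr 1
    · exact Finset.sum_congr rfl fun i _ => by ring
    · push_cast; ring
  have hsmall : (n : ℝ) * 2⁻¹ ^ n < 1 := calc
    (n : ℝ) * 2⁻¹ ^ n < 2 ^ n * 2⁻¹ ^ n := by gcongr
    _ = 1 := by rw [← mul_pow]; norm_num
  rw [hsplit, sum_Icc_inv_two_pow_succ, pow_succ]
  nlinarith [pow_pos (inv_pos.mpr (two_pos : (0 : ℝ) < 2)) n]

theorem torus_separation
    (x : ℕ → Torus) (r : ℕ → ℝ) (hr : ∀ i, r i = (2 : ℝ) ^ (-(i : ℤ) - 2))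
    (hmax : ∀ k : ℕ, 2 ≤ k → ∀ y : Torus,
      torusSetDist y (⋃ i ∈ Finset.Icc 1 (k - 1), torusBall (x i) (r i)) ≤
        torusSetDist (x k) (⋃ i ∈ Finset.Icc 1 (k - 1), torusBall (x i) (r i))) :
    ∀ k : ℕ, 2 ≤ k →
      2 * r k ≤ torusSetDist (x k) (⋃ i ∈ Finset.Icc 1 (k - 1), torusBall (x i) (r i)) := by
  intro k hk
  have hr' : ∀ i, r i = 2⁻¹ ^ (i + 2) := fun i => by
    rw [hr, ← neg_add', zpow_neg, ← inv_zpow, show (i : ℤ) + 2 = ((i + 2 : ℕ) : ℤ) by push_cast; rfl,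
      zpow_natCast]
  have hrpos : ∀ i, 0 < r i := fun i => by rw [hr']; positivity
  obtain ⟨c, hc⟩ := AddCircle.exists_forall_lt_dist (Finset.Icc 1 (k - 1)) (fun i => (x i).1)
    (fun i => r i + 2 * r k) (fun i _ => by linarith [hrpos i, hrpos k]) (by
      obtain ⟨n, rfl⟩ : ∃ n, k = n + 1 := ⟨k - 1, by omega⟩
      simpa only [hr', Nat.add_sub_cancel, add_assoc] using sum_Icc_two_mul_radius_lt_one n)
  have hx₁ : x 1 ∈ ⋃ i ∈ Finset.Icc 1 (k - 1), torusBall (x i) (r i) :=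
    Set.mem_biUnion (Finset.mem_Icc.mpr ⟨le_rfl, by omega⟩)
      (show torusDist (x 1) (x 1) < r 1 by simpa [torusDist] using hrpos 1)
  refine le_trans ?_ (hmax k hk (c, 0))
  refine le_torusSetDist ⟨_, hx₁⟩ fun a ha => ?_
  obtain ⟨i, hi, hai⟩ := Set.mem_iUnion₂.mp ha
  exact le_torusDist_of_mem_torusBall 0 hai (hc i hi)
end

section
/- Let c := 2^{-10}π^{-2}, r_i := 2^{-i-2}, and let V_U := Σ_{i=1}^∞ cπ r_i². Define φ : [0, V_U] → ℝ by φ(t) := Σ_{i=1}^{k_t} 2cπ r_i + 2cπ √(t/(cπ) − Σ_{i=1}^{k_t} r_i²) for t ∈ (0,V_U), where k_t is the unique index with Σ_{i=1}^{k_t} cπ r_i² < t ≤ Σ_{i=1}^{k_t+1} cπ r_i², and φ(0) := 0, φ(V_U) := Σ_{i=1}^∞ 2cπ r_i = cπ/2. Then for every t ∈ (0, V_U): φ(V_U) < φ(t) + (1/(4√π))·√(V_U − t). -/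
open Real

lemma pow_aux (i : ℕ) : (2:ℝ) ^ (-(i:ℤ) - 2) = (1/2:ℝ)^i / 4 := by
  rw [show (-(i:ℤ) - 2) = -((i:ℤ) + 2) by ring, zpow_neg,
    zpow_add₀ (two_ne_zero) , zpow_natCast]
  rw [one_div, inv_pow]
  ring

lemma quarter_pow (n : ℕ) : (1/4:ℝ)^n = ((1/2:ℝ)^n)^2 := by
  rw [sq, ← mul_pow]; norm_num

lemma sum_r (n : ℕ) : ∑ i ∈ Finset.Icc 1 n, (1/2:ℝ)^i / 4 = 1/4 - (1/2:ℝ)^n / 4 := by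
  induction n with
  | zero => simp
  | succ n ih =>
      rw [Finset.sum_Icc_succ_top (by omega : 1 ≤ n + 1), ih, pow_succ]
      ring

lemma sum_r2 (n : ℕ) : ∑ i ∈ Finset.Icc 1 n, ((1/2:ℝ)^i / 4)^2 = 1/48 - (1/4:ℝ)^n / 48 := by
  induction n with
  | zero => simp
  | succ n ih =>
      rw [Finset.sum_Icc_succ_top (by omega : 1 ≤ n + 1), ih]
      simp only [quarter_pow, pow_succ]
      ring

theorem phi_lemma
    (c : ℝ) (hc : c = 2 ^ (-10 : ℤ) * π ^ (-2 : ℤ))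
    (r : ℕ → ℝ) (hr : ∀ i, r i = (2 : ℝ) ^ (-(i : ℤ) - 2))
    (VU : ℝ) (hVU : VU = ∑' i : ℕ, c * π * r (i + 1) ^ 2)
    (t : ℝ) (ht0 : 0 < t) (htV : t < VU)
    (k : ℕ) (hk1 : (∑ i ∈ Finset.Icc 1 k, c * π * r i ^ 2) < t)
    (hk2 : t ≤ ∑ i ∈ Finset.Icc 1 (k + 1), c * π * r i ^ 2) :
    c * π / 2 <
      ((∑ i ∈ Finset.Icc 1 k, 2 * c * π * r i) +
        2 * c * π * Real.sqrt (t / (c * π) - ∑ i ∈ Finset.Icc 1 k, r i ^ 2)) +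
      (1 / (4 * Real.sqrt π)) * Real.sqrt (VU - t) := by
  have hπ : 0 < π := pi_pos
  have hc0 : 0 < c := by
    rw [hc]; positivity
  have hcπ : 0 < c * π := by positivity
  have hr' : ∀ i, r i = (1/2:ℝ)^i / 4 := fun i => by rw [hr, pow_aux]
  -- value of VU
  have hVU' : VU = c * π / 48 := by
    rw [hVU]
    have h1 : ∀ i : ℕ, c * π * r (i+1) ^ 2 = (c * π / 64) * (1/4:ℝ)^i := by
      intro i
      rw [hr']
      rw [quarter_pow, pow_succ]
      ring
    simp only [h1]
    rw [tsum_mul_left, tsum_geometric_of_lt_one (by norm_num) (by norm_num : (1/4:ℝ) < 1)]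
    norm_num
    ring
  -- sum of r i over Icc 1 k
  have hsum1 : ∑ i ∈ Finset.Icc 1 k, 2 * c * π * r i = c * π / 2 - c * π * (1/2:ℝ)^k / 2 := by
    calc ∑ i ∈ Finset.Icc 1 k, 2 * c * π * r i
        = 2 * c * π * ∑ i ∈ Finset.Icc 1 k, (1/2:ℝ)^i / 4 := by
          rw [Finset.mul_sum]; exact Finset.sum_congr rfl fun i _ => by rw [hr']
      _ = _ := by rw [sum_r]; ring
  -- bound on VU - t
  have hsum2 : ∑ i ∈ Finset.Icc 1 (k+1), c * π * r i ^ 2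
      = c * π / 48 - c * π * (1/4:ℝ)^(k+1) / 48 := by
    calc ∑ i ∈ Finset.Icc 1 (k+1), c * π * r i ^ 2
        = c * π * ∑ i ∈ Finset.Icc 1 (k+1), ((1/2:ℝ)^i / 4)^2 := by
          rw [Finset.mul_sum]; exact Finset.sum_congr rfl fun i _ => by rw [hr']
      _ = _ := by rw [sum_r2]; ring
  have hVt : c * π * (1/4:ℝ)^(k+1) / 48 ≤ VU - t := by
    rw [hVU']
    have := hk2
    rw [hsum2] at this
    linarith
  -- the sqrt term in phi is nonnegative
  have hs0 : 0 ≤ 2 * c * π * Real.sqrt (t / (c * π) - ∑ i ∈ Finset.Icc 1 k, r i ^ 2) := by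
    positivity
  -- lower bound sqrt (VU - t)
  have hsqrt1 : Real.sqrt (c * π / 48) * (1/2:ℝ)^(k+1) ≤ Real.sqrt (VU - t) := by
    have h : c * π * (1/4:ℝ)^(k+1) / 48 = (c * π / 48) * ((1/2:ℝ)^(k+1))^2 := by
      rw [quarter_pow]; ring
    calc Real.sqrt (c * π / 48) * (1/2:ℝ)^(k+1)
        = Real.sqrt ((c * π / 48) * ((1/2:ℝ)^(k+1))^2) := by
          rw [Real.sqrt_mul (by positivity), Real.sqrt_sq (by positivity)]
      _ ≤ Real.sqrt (VU - t) := Real.sqrt_le_sqrt (by rw [← h]; exact hVt)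
  -- key numeric inequality : c*π < sqrt(c*π/48) / (4 * sqrt π)
  have hkey : c * π < 1 / (4 * Real.sqrt π) * Real.sqrt (c * π / 48) := by
    have hP : 0 < Real.sqrt π := Real.sqrt_pos.2 hπ
    have hP2 : Real.sqrt π ^ 2 = π := Real.sq_sqrt hπ.le
    rw [div_mul_eq_mul_div, one_mul, lt_div_iff₀ (by positivity)]
    have h := (Real.lt_sqrt (by positivity : (0:ℝ) ≤ c * π * (4 * Real.sqrt π))).2
      (show (c * π * (4 * Real.sqrt π))^2 < c * π / 48 by
        have hcval : c * π ^ 2 = 1 / 1024 := by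
          have hπ2 : (π:ℝ) ^ (-2:ℤ) = (π ^ 2)⁻¹ := by
            rw [zpow_neg, show ((2:ℤ)) = ((2:ℕ):ℤ) from rfl, zpow_natCast]
          have h2 : (2:ℝ) ^ (-10:ℤ) = 1/1024 := by norm_num
          rw [hc, hπ2, h2]
          field_simp
        nlinarith [sq_nonneg (c*π), hcπ, hP2, hP])
    linarith
  -- combine
  have hmain : c * π * (1/2:ℝ)^k / 2 < 1 / (4 * Real.sqrt π) * Real.sqrt (VU - t) := by
    have h1 : 1 / (4 * Real.sqrt π) * (Real.sqrt (c * π / 48) * (1/2:ℝ)^(k+1))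
        ≤ 1 / (4 * Real.sqrt π) * Real.sqrt (VU - t) := by
      have hP : 0 < Real.sqrt π := Real.sqrt_pos.2 hπ
      exact mul_le_mul_of_nonneg_left hsqrt1 (by positivity)
    have h2 : c * π * (1/2:ℝ)^k / 2
        < 1 / (4 * Real.sqrt π) * (Real.sqrt (c * π / 48) * (1/2:ℝ)^(k+1)) := by
      have hpk : (0:ℝ) < (1/2:ℝ)^k := by positivity
      have := mul_lt_mul_of_pos_right hkey (show (0:ℝ) < (1/2:ℝ)^k / 2 by positivity)
      calc c * π * (1/2:ℝ)^k / 2 = (c * π) * ((1/2:ℝ)^k / 2) := by ring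
        _ < (1 / (4 * Real.sqrt π) * Real.sqrt (c * π / 48)) * ((1/2:ℝ)^k / 2) := this
        _ = 1 / (4 * Real.sqrt π) * (Real.sqrt (c * π / 48) * (1/2:ℝ)^(k+1)) := by
            rw [pow_succ]; ring
    linarith
  rw [hsum1]
  linarith
end
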